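/- Let K ≥ 3 and let W₁,...,W_K be i.i.d. uniform on F^L over a finite field F, jointly independent of keys Z₁,...,Z_K. If for users k ≠ u the security constraint I({X_i}_{i≠u}; {W_i}_{i≠u} | ∑_{i=1}^K W_i, W_u, Z_u) = 0 holds and the Z's are independent of the W's, then I(X_k; W_k | W_u, Z_u) = 0. -/

import Mathlib

open Finset

/-- Probability of `X = a` under the probability mass function `μ` on the finite
sample space `Ω`. -/
noncomputable def prW {Ω α : Type*} [Fintype Ω] [DecidableEq α] (μ : Ω → ℝ)
    (X : Ω → α) (a : α) : ℝ :=
  ∑ ω ∈ Finset.univ.filter (fun ω => X ω = a), μ ω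

/-- Shannon entropy (natural base) of `X` under the probability mass function `μ`. -/
noncomputable def entW {Ω α : Type*} [Fintype Ω] [Fintype α] [DecidableEq α] (μ : Ω → ℝ)
    (X : Ω → α) : ℝ :=
  -∑ a : α, prW μ X a * Real.log (prW μ X a)

/-- Conditional entropy `H(X | Y)` under `μ`. -/
noncomputable def condEntW {Ω α β : Type*} [Fintype Ω] [Fintype α] [Fintype β]
    [DecidableEq α] [DecidableEq β] (μ : Ω → ℝ) (X : Ω → α) (Y : Ω → β) : ℝ :=
  entW μ (fun ω => (X ω, Y ω)) - entW μ Y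

/-- Conditional mutual information `I(X ; Y | Z)` under `μ`. -/
noncomputable def cmiW {Ω α β γ : Type*} [Fintype Ω] [Fintype α] [Fintype β] [Fintype γ]
    [DecidableEq α] [DecidableEq β] [DecidableEq γ] (μ : Ω → ℝ)
    (X : Ω → α) (Y : Ω → β) (Z : Ω → γ) : ℝ :=
  entW μ (fun ω => (X ω, Z ω)) + entW μ (fun ω => (Y ω, Z ω))
    - entW μ (fun ω => (X ω, Y ω, Z ω)) - entW μ Z

/-- Product mass function making the inputs `W₁,…,W_K` i.i.d. uniform on `F^L` and
jointly independent of the key randomness `z`, which has mass function `ν`. -/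
noncomputable def dsaMeas (F : Type) [Fintype F] (K L : ℕ) {ΩZ : Type} [Fintype ΩZ]
    (ν : ΩZ → ℝ) : (Fin K → Fin L → F) × ΩZ → ℝ :=
  fun ω => ν ω.2 / (Fintype.card (Fin K → Fin L → F) : ℝ)

/-!
Vanishing conditional mutual information is the factorisation `P(x,y,z) P(z) = P(x,z) P(y,z)`:
with `p = P(x,y,z)` and `q = P(x,z) P(y,z) / P(z)`,
`I(X ; Y | Z) = ∑ (p log (p / q) - p + q) = ∑ q klFun (p / q)` has nonnegative terms, vanishing
exactly where `p = q`. Projected to user `k`, the security constraint therefore makes `X_k` and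
`W_k` conditionally independent given `(S, W_u, Z_u)`, where `S = ∑ W_i`. Since `K ≥ 3` there is
a third user `j`; translating `W_j` preserves the measure, fixes `W_k`, `W_u`, `Z_u` and
translates `S`, so `S` is uniform given `(W_u, Z_u)` and given `(W_k, W_u, Z_u)`. Averaging the
factorisation over `S` then removes `S` from the conditioning.
-/

open Real InformationTheory

section Distribution

variable {Ω α β σ : Type*} [Fintype Ω] (μ : Ω → ℝ) [DecidableEq α] [DecidableEq β]

lemma prW_congr {V : Ω → α} {W : Ω → β} {a : α} {b : β} (h : ∀ ω, V ω = a ↔ W ω = b) :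
    prW μ V a = prW μ W b := by
  simp only [prW, h]

lemma prW_nonneg (hμ : ∀ ω, 0 ≤ μ ω) (V : Ω → α) (a : α) : 0 ≤ prW μ V a :=
  sum_nonneg fun ω _ => hμ ω

lemma prW_le_prW (hμ : ∀ ω, 0 ≤ μ ω) {V : Ω → α} {W : Ω → β} {a : α} {b : β}
    (h : ∀ ω, V ω = a → W ω = b) : prW μ V a ≤ prW μ W b :=
  sum_le_sum_of_subset_of_nonneg (monotone_filter_right _ fun ω _ => h ω)
    fun ω _ _ => hμ ω

lemma sum_prW_mul [Fintype α] (V : Ω → α) (g : α → ℝ) :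
    ∑ a, prW μ V a * g a = ∑ ω, μ ω * g (V ω) := by
  simp only [prW, sum_filter, sum_mul, ite_mul, zero_mul]
  rw [sum_comm]
  simp

lemma sum_prW [Fintype α] (V : Ω → α) : ∑ a, prW μ V a = ∑ ω, μ ω := by
  simpa using sum_prW_mul μ V 1

lemma entW_eq_sum [Fintype α] (V : Ω → α) : entW μ V = -∑ ω, μ ω * log (prW μ V (V ω)) := by
  rw [entW, sum_prW_mul μ V fun a => log (prW μ V a)]

lemma sum_prW_of_iff [Fintype σ] (S : Ω → σ) {V : Ω → α} {W : Ω → β} {v : σ → α} {b : β}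
    (h : ∀ ω s, V ω = v s ↔ W ω = b ∧ S ω = s) :
    ∑ s, prW μ V (v s) = prW μ W b := by
  classical
  simp only [prW, sum_filter, h]
  rw [sum_comm]
  simp [ite_and]

lemma sum_prW_fst [Fintype α] (A : Ω → α) (W : Ω → β) (w : β) :
    ∑ a, prW μ (fun ω => (A ω, W ω)) (a, w) = prW μ W w :=
  sum_prW_of_iff μ A fun ω a => by simp only [Prod.mk.injEq, and_comm]

lemma sum_prW_snd {γ : Type*} [DecidableEq γ] [Fintype β] (A : Ω → α) (B : Ω → β)
    (C : Ω → γ) (a : α) (c : γ) :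
    ∑ b, prW μ (fun ω => (A ω, B ω, C ω)) (a, b, c) = prW μ (fun ω => (A ω, C ω)) (a, c) :=
  sum_prW_of_iff μ B fun ω b => by simp only [Prod.mk.injEq]; tauto

lemma prW_map_fst [Fintype α] {α' : Type*} [DecidableEq α'] (f : α → α') (A : Ω → α)
    (W : Ω → β) (x : α') (w : β) :
    prW μ (fun ω => (f (A ω), W ω)) (x, w) =
      ∑ a with f a = x, prW μ (fun ω => (A ω, W ω)) (a, w) := by
  simp only [prW, sum_filter, ite_sum_zero]
  rw [sum_comm]
  refine sum_congr rfl fun ω _ => ?_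
  rw [sum_eq_single (A ω) (fun a _ ha => by simp [Ne.symm ha]) (by simp)]
  simp [ite_and]

lemma prW_eq_of_equiv (T : Ω ≃ Ω) (hT : ∀ ω, μ (T ω) = μ ω) (V : Ω → α) {a b : α}
    (h : ∀ ω, V (T ω) = a ↔ V ω = b) : prW μ V a = prW μ V b := by
  simp only [prW, sum_filter]
  rw [← T.sum_comp]
  exact sum_congr rfl fun ω _ => by rw [hT]; exact if_congr (h ω) rfl rfl

end Distribution

lemma mul_log_sub_add_eq_mul_klFun {p a b c : ℝ} (hp : 0 ≤ p) (hpa : p ≤ a) (hpb : p ≤ b)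
    (hac : a ≤ c) :
    p * (log p + log c - log a - log b) - p + a * b / c =
      a * b / c * klFun (p * c / (a * b)) := by
  rcases hp.eq_or_lt with rfl | hp
  · simp [klFun_zero]
  have ha : 0 < a := hp.trans_le hpa
  have hb : 0 < b := hp.trans_le hpb
  have hc : 0 < c := ha.trans_le hac
  rw [klFun_apply, log_div (by positivity) (by positivity), log_mul hp.ne' hc.ne',
    log_mul ha.ne' hb.ne']
  field_simp
  ring

lemma mul_log_sub_add_nonneg {p a b c : ℝ} (hp : 0 ≤ p) (hpa : p ≤ a) (hpb : p ≤ b)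
    (hac : a ≤ c) : 0 ≤ p * (log p + log c - log a - log b) - p + a * b / c := by
  have ha := hp.trans hpa
  have hb := hp.trans hpb
  have hc := ha.trans hac
  rw [mul_log_sub_add_eq_mul_klFun hp hpa hpb hac]
  exact mul_nonneg (by positivity) (klFun_nonneg (by positivity))

lemma mul_log_sub_add_eq_zero_iff {p a b c : ℝ} (hp : 0 ≤ p) (hpa : p ≤ a) (hpb : p ≤ b)
    (hac : a ≤ c) :
    p * (log p + log c - log a - log b) - p + a * b / c = 0 ↔ p * c = a * b := by
  have ha := hp.trans hpa
  have hb := hp.trans hpb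
  have hc := ha.trans hac
  rw [mul_log_sub_add_eq_mul_klFun hp hpa hpb hac, mul_eq_zero,
    klFun_eq_zero_iff (by positivity)]
  by_cases hq : a * b / c = 0
  · have hab : a * b = 0 := by
      rcases div_eq_zero_iff.1 hq with h | h
      · exact h
      · simp [le_antisymm (h ▸ hac) ha]
    have hp0 : p = 0 := by nlinarith [mul_le_mul hpa hpb hp ha]
    simp [hab, hp0]
  · rw [div_eq_zero_iff, not_or] at hq
    simp [hq.1, hq.2, div_eq_one_iff_eq hq.1]

section CondIndep

variable {Ω α β γ : Type*} [Fintype Ω] (μ : Ω → ℝ)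
  [DecidableEq α] [DecidableEq β] [DecidableEq γ]

-- No division by `P(Z = z)`: the condition is vacuous where that probability vanishes.
def CondIndepW (X : Ω → α) (Y : Ω → β) (Z : Ω → γ) : Prop :=
  ∀ x y z, prW μ (fun ω => (X ω, Y ω, Z ω)) (x, y, z) * prW μ Z z =
    prW μ (fun ω => (X ω, Z ω)) (x, z) * prW μ (fun ω => (Y ω, Z ω)) (y, z)

variable {μ} {X : Ω → α} {Y : Ω → β} {Z : Ω → γ}

lemma CondIndepW.symm (h : CondIndepW μ X Y Z) : CondIndepW μ Y X Z := fun y x z => by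
  rw [prW_congr μ (W := fun ω => (X ω, Y ω, Z ω)) (b := (x, y, z))
    fun ω => by simp only [Prod.mk.injEq]; tauto, h x y z, mul_comm]

lemma CondIndepW.comp_left [Fintype α] {α' : Type*} [DecidableEq α']
    (h : CondIndepW μ X Y Z) (f : α → α') : CondIndepW μ (fun ω => f (X ω)) Y Z := by
  intro x y z
  rw [prW_map_fst, prW_map_fst, sum_mul, sum_mul]
  exact sum_congr rfl fun a _ => h a y z

lemma CondIndepW.comp [Fintype α] [Fintype β] {α' β' : Type*} [DecidableEq α']
    [DecidableEq β'] (h : CondIndepW μ X Y Z) (f : α → α') (g : β → β') :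
    CondIndepW μ (fun ω => f (X ω)) (fun ω => g (Y ω)) Z :=
  ((h.comp_left f).symm.comp_left g).symm

lemma CondIndepW.of_prod_uniform {σ : Type*} [Fintype σ] [DecidableEq σ] {S : Ω → σ}
    (h : CondIndepW μ X Y fun ω => (S ω, Z ω))
    (hS : ∀ s s' z, prW μ (fun ω => (S ω, Z ω)) (s, z) = prW μ (fun ω => (S ω, Z ω)) (s', z))
    (hYS : ∀ y s s' z, prW μ (fun ω => (Y ω, S ω, Z ω)) (y, s, z) =
      prW μ (fun ω => (Y ω, S ω, Z ω)) (y, s', z)) :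
    CondIndepW μ X Y Z := by
  intro x y z
  have hXY : ∑ s, prW μ (fun ω => (X ω, Y ω, S ω, Z ω)) (x, y, s, z) =
      prW μ (fun ω => (X ω, Y ω, Z ω)) (x, y, z) :=
    sum_prW_of_iff μ S fun ω s => by simp only [Prod.mk.injEq]; tauto
  calc prW μ (fun ω => (X ω, Y ω, Z ω)) (x, y, z) * prW μ Z z
      = ∑ s, ∑ s', prW μ (fun ω => (X ω, Y ω, S ω, Z ω)) (x, y, s, z) *
          prW μ (fun ω => (S ω, Z ω)) (s', z) := by
        rw [← hXY, ← sum_prW_fst μ S Z, sum_mul_sum]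
    _ = ∑ s, ∑ s', prW μ (fun ω => (X ω, S ω, Z ω)) (x, s, z) *
          prW μ (fun ω => (Y ω, S ω, Z ω)) (y, s', z) := by
        refine sum_congr rfl fun s _ => sum_congr rfl fun s' _ => ?_
        rw [hS s' s, h x y (s, z), hYS y s s']
    _ = prW μ (fun ω => (X ω, Z ω)) (x, z) * prW μ (fun ω => (Y ω, Z ω)) (y, z) := by
        rw [← sum_mul_sum, sum_prW_snd, sum_prW_snd]

end CondIndep

section Cmi

variable {Ω α β γ : Type*} [Fintype Ω] (μ : Ω → ℝ) [Fintype α] [Fintype β] [Fintype γ]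
  [DecidableEq α] [DecidableEq β] [DecidableEq γ] (X : Ω → α) (Y : Ω → β) (Z : Ω → γ)

lemma cmiW_eq_sum_mul_log : cmiW μ X Y Z = ∑ t : α × β × γ,
    prW μ (fun ω => (X ω, Y ω, Z ω)) t * (log (prW μ (fun ω => (X ω, Y ω, Z ω)) t)
      + log (prW μ Z t.2.2) - log (prW μ (fun ω => (X ω, Z ω)) (t.1, t.2.2))
      - log (prW μ (fun ω => (Y ω, Z ω)) t.2)) := by
  rw [sum_prW_mul]
  simp only [cmiW, entW_eq_sum, mul_add, mul_sub, sum_add_distrib, sum_sub_distrib]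
  ring

lemma sum_prW_mul_prW_div : ∑ t : α × β × γ,
    prW μ (fun ω => (X ω, Z ω)) (t.1, t.2.2) * prW μ (fun ω => (Y ω, Z ω)) t.2 /
      prW μ Z t.2.2 = ∑ ω, μ ω := by
  simp only [Fintype.sum_prod_type]
  calc _ = ∑ x, ∑ z, ∑ y, prW μ (fun ω => (X ω, Z ω)) (x, z) *
        prW μ (fun ω => (Y ω, Z ω)) (y, z) / prW μ Z z := sum_congr rfl fun _ _ => sum_comm
    _ = ∑ z, (∑ x, prW μ (fun ω => (X ω, Z ω)) (x, z)) *
        (∑ y, prW μ (fun ω => (Y ω, Z ω)) (y, z)) / prW μ Z z := by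
        rw [sum_comm]
        simp only [sum_mul_sum, sum_div]
    _ = ∑ ω, μ ω := by simp only [sum_prW_fst, mul_self_div_self, sum_prW]

-- The added terms cancel (`sum_prW_mul_prW_div`), and each summand is nonnegative.
lemma cmiW_eq_sum_gap : cmiW μ X Y Z = ∑ t : α × β × γ,
    (prW μ (fun ω => (X ω, Y ω, Z ω)) t * (log (prW μ (fun ω => (X ω, Y ω, Z ω)) t)
      + log (prW μ Z t.2.2) - log (prW μ (fun ω => (X ω, Z ω)) (t.1, t.2.2))
      - log (prW μ (fun ω => (Y ω, Z ω)) t.2))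
    - prW μ (fun ω => (X ω, Y ω, Z ω)) t
    + prW μ (fun ω => (X ω, Z ω)) (t.1, t.2.2) * prW μ (fun ω => (Y ω, Z ω)) t.2
      / prW μ Z t.2.2) := by
  rw [sum_add_distrib, sum_sub_distrib, sum_prW_mul_prW_div, sum_prW, cmiW_eq_sum_mul_log]
  ring

theorem cmiW_eq_zero_iff (hμ : ∀ ω, 0 ≤ μ ω) : cmiW μ X Y Z = 0 ↔ CondIndepW μ X Y Z := by
  have hle : ∀ x y z,
      prW μ (fun ω => (X ω, Y ω, Z ω)) (x, y, z) ≤ prW μ (fun ω => (X ω, Z ω)) (x, z) ∧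
      prW μ (fun ω => (X ω, Y ω, Z ω)) (x, y, z) ≤ prW μ (fun ω => (Y ω, Z ω)) (y, z) ∧
      prW μ (fun ω => (X ω, Z ω)) (x, z) ≤ prW μ Z z := fun x y z =>
    ⟨prW_le_prW μ hμ fun ω => by simp only [Prod.mk.injEq]; tauto,
      prW_le_prW μ hμ fun ω => by simp only [Prod.mk.injEq]; tauto,
      prW_le_prW μ hμ fun ω => by simp only [Prod.mk.injEq]; tauto⟩
  rw [cmiW_eq_sum_gap, Fintype.sum_eq_zero_iff_of_nonneg, funext_iff, CondIndepW]
  · simp only [Prod.forall, Pi.zero_apply]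
    refine forall_congr' fun x => forall_congr' fun y => forall_congr' fun z => ?_
    obtain ⟨h1, h2, h3⟩ := hle x y z
    exact mul_log_sub_add_eq_zero_iff (prW_nonneg μ hμ _ _) h1 h2 h3
  · rintro ⟨x, y, z⟩
    obtain ⟨h1, h2, h3⟩ := hle x y z
    exact mul_log_sub_add_nonneg (prW_nonneg μ hμ _ _) h1 h2 h3

end Cmi

lemma prW_dsaMeas_eq_of_add_single {F : Type} [AddGroup F] [Fintype F] {K L : ℕ} {ΩZ : Type}
    [Fintype ΩZ] (ν : ΩZ → ℝ) {α : Type*} [DecidableEq α] (V : (Fin K → Fin L → F) × ΩZ → α)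
    (j : Fin K) (d : Fin L → F) {a b : α}
    (h : ∀ ω, V (ω.1 + Pi.single j d, ω.2) = a ↔ V ω = b) :
    prW (dsaMeas F K L ν) V a = prW (dsaMeas F K L ν) V b :=
  prW_eq_of_equiv _
    ((Equiv.addRight (Pi.single j d : Fin K → Fin L → F)).prodCongr (Equiv.refl ΩZ))
    (fun _ => rfl) V h

theorem stmt13_general (F : Type) [Field F] [Fintype F] [DecidableEq F] (K L : ℕ) (hK : 3 ≤ K)
    (ΩZ 𝒵 𝒳 : Type) [Fintype ΩZ] [Fintype 𝒵] [DecidableEq 𝒵] [Fintype 𝒳] [DecidableEq 𝒳]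
    (ν : ΩZ → ℝ) (hν0 : ∀ z, 0 ≤ ν z)
    (Z : Fin K → ΩZ → 𝒵)
    (X : Fin K → (Fin K → Fin L → F) × ΩZ → 𝒳)
    (k u : Fin K) (hku : k ≠ u)
    (hsec : cmiW (dsaMeas F K L ν)
        (fun ω => fun i : {i : Fin K // i ≠ u} => X i.1 ω)
        (fun ω => fun i : {i : Fin K // i ≠ u} => ω.1 i.1)
        (fun ω => (∑ i, ω.1 i, ω.1 u, Z u ω.2)) = 0) :
    cmiW (dsaMeas F K L ν) (X k) (fun ω => ω.1 k)
        (fun ω => (ω.1 u, Z u ω.2)) = 0 := by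
  have hμ : ∀ ω, 0 ≤ dsaMeas F K L ν ω := fun ω => div_nonneg (hν0 ω.2) (Nat.cast_nonneg _)
  obtain ⟨j, hjk, hju⟩ := Fin.exists_ne_and_ne_of_two_lt k u hK
  have hci := ((cmiW_eq_zero_iff _ _ _ _ hμ).1 hsec).comp (· ⟨k, hku⟩) (· ⟨k, hku⟩)
  refine (cmiW_eq_zero_iff _ _ _ _ hμ).2
    (hci.of_prod_uniform (fun s s' c => ?_) fun y s s' c => ?_)
  · refine prW_dsaMeas_eq_of_add_single ν _ j (s - s') fun ω => ?_
    simp [sum_add_distrib, ← eq_sub_iff_add_eq, hju.symm]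
  · refine prW_dsaMeas_eq_of_add_single ν _ j (s - s') fun ω => ?_
    simp [sum_add_distrib, ← eq_sub_iff_add_eq, hju.symm, hjk.symm]

/-- Lemma 2 of the paper: with `K ≥ 3` i.i.d. uniform inputs independent of the keys,
messages deterministic functions of the local input and key, and the security
constraint `I({X_i}_{i≠u} ; {W_i}_{i≠u} | ∑ W_i, W_u, Z_u) = 0` at user `u`,
the message of user `k ≠ u` reveals nothing about its own input:
`I(X_k ; W_k | W_u, Z_u) = 0`. -/
theorem stmt13 (F : Type) [Field F] [Fintype F] [DecidableEq F] (K L : ℕ) (hK : 3 ≤ K)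
    (ΩZ 𝒵 𝒳 : Type) [Fintype ΩZ] [Fintype 𝒵] [DecidableEq 𝒵] [Fintype 𝒳] [DecidableEq 𝒳]
    (ν : ΩZ → ℝ) (hν0 : ∀ z, 0 ≤ ν z) (hν1 : ∑ z, ν z = 1)
    (Z : Fin K → ΩZ → 𝒵)
    (X : Fin K → (Fin K → Fin L → F) × ΩZ → 𝒳)
    (hX : ∀ i, ∃ f : (Fin L → F) × 𝒵 → 𝒳, ∀ ω, X i ω = f (ω.1 i, Z i ω.2))
    (k u : Fin K) (hku : k ≠ u)
    (hsec : cmiW (dsaMeas F K L ν)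
        (fun ω => fun i : {i : Fin K // i ≠ u} => X i.1 ω)
        (fun ω => fun i : {i : Fin K // i ≠ u} => ω.1 i.1)
        (fun ω => (∑ i, ω.1 i, ω.1 u, Z u ω.2)) = 0) :
    cmiW (dsaMeas F K L ν) (X k) (fun ω => ω.1 k)
        (fun ω => (ω.1 u, Z u ω.2)) = 0 :=
  stmt13_general F K L hK ΩZ 𝒵 𝒳 ν hν0 Z X k u hku hsec
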